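/- Let W be a finite set, (J_v)_{v∈W} a family of finite abelian groups, and H = ∏_{v∈W} J_v. Let I(H) ⊂ ℤ[H] be the augmentation ideal. Then for every z ∈ ℤ[H], the element ∑_{X ⊆ W} (−1)^{|W∖X|} π_X(z) lies in I(H)^{|W|}. -/

import Mathlib

/-- For a subset `X ⊆ W`, the group endomorphism `π_X` of `H = ∏_{v ∈ W} J v` which replaces
the `v`-component by the identity for every `v ∉ X` and leaves the `v`-component unchanged for
`v ∈ X`. -/
def piProj {W : Type*} [DecidableEq W] (J : W → Type*) [∀ v, CommGroup (J v)]
    (X : Finset W) : (∀ v, J v) →* (∀ v, J v) :=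
  MonoidHom.mk' (fun σ v => if v ∈ X then σ v else 1) (by
    intro a b
    funext v
    by_cases h : v ∈ X <;> simp [h])

/-- The augmentation ideal `I(H)` of the group ring `ℤ[H]`: the kernel of the ring
homomorphism `ℤ[H] → ℤ` sending every group element to `1`. -/
noncomputable def augmentationIdeal (H : Type*) [CommGroup H] :
    Ideal (MonoidAlgebra ℤ H) :=
  RingHom.ker (MonoidAlgebra.lift ℤ ℤ H 1)

/-!
On a group element `σ` the alternating sum is the expansion of `∏ v, ([π_{v} σ] - 1)`, since
`π_X σ = ∏ v ∈ X, π_{v} σ`; this is a product of `|W|` elements of `I(H)`. The general case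
follows because the alternating sum is additive in `z`.
-/

open MonoidAlgebra Finset

theorem MonoidAlgebra.mapDomainRingHom_of (R : Type*) {M N : Type*} [Semiring R] [Monoid M]
    [Monoid N] (f : M →* N) (g : M) : mapDomainRingHom R f (of R M g) = of R N (f g) :=
  mapDomain_single

section piProj

variable {W : Type*} [DecidableEq W] {J : W → Type*} [∀ v, CommGroup (J v)]

theorem piProj_apply (X : Finset W) (σ : ∀ v, J v) (v : W) :
    piProj J X σ v = if v ∈ X then σ v else 1 :=
  rfl

theorem prod_piProj_singleton (X : Finset W) (σ : ∀ v, J v) :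
    ∏ v ∈ X, piProj J {v} σ = piProj J X σ := by
  funext w
  simp only [Finset.prod_apply, piProj_apply, Finset.mem_singleton, Finset.prod_ite_eq]

theorem sum_neg_one_pow_smul_of_piProj [Fintype W] (R : Type*) [CommRing R] (σ : ∀ v, J v) :
    ∑ X : Finset W, ((-1 : ℤ) ^ (univ \ X).card) • of R (∀ v, J v) (piProj J X σ) =
      ∏ v, (of R (∀ v, J v) (piProj J {v} σ) - 1) := by
  simp only [sub_eq_add_neg, prod_add, powerset_univ, prod_const, ← map_prod,
    prod_piProj_singleton, zsmul_eq_mul, Int.cast_pow, Int.cast_neg, Int.cast_one]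
  exact sum_congr rfl fun X _ => mul_comm _ _

end piProj

theorem of_sub_one_mem_augmentationIdeal {H : Type*} [CommGroup H] (h : H) :
    of ℤ H h - 1 ∈ augmentationIdeal H := by
  simp only [augmentationIdeal, RingHom.mem_ker, map_sub, map_one, lift_of,
    MonoidHom.one_apply, sub_self]

theorem MonoidAlgebra.addMonoidHom_mem_of_forall_of {G M S : Type*} [Monoid G] [AddCommGroup M]
    [SetLike S M] [AddSubgroupClass S M] (f : MonoidAlgebra ℤ G →+ M) (s : S)
    (hf : ∀ g, f (of ℤ G g) ∈ s) (z : MonoidAlgebra ℤ G) : f z ∈ s := by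
  induction z using MonoidAlgebra.induction_on with
  | of g => exact hf g
  | add x y hx hy => exact map_add f x y ▸ add_mem hx hy
  | smul r x hx => exact (map_zsmul f r x).symm ▸ zsmul_mem hx r

theorem sum_proj_mem_augmentationIdeal_pow_general {W : Type*} [Fintype W] [DecidableEq W]
    (J : W → Type*) [∀ v, CommGroup (J v)]
    (z : MonoidAlgebra ℤ (∀ v, J v)) :
    ∑ X : Finset W, ((-1 : ℤ) ^ (Finset.univ \ X).card) •
        MonoidAlgebra.mapDomainRingHom ℤ (piProj J X) z ∈
      augmentationIdeal (∀ v, J v) ^ Fintype.card W := by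
  let altSum : MonoidAlgebra ℤ (∀ v, J v) →+ MonoidAlgebra ℤ (∀ v, J v) :=
    ∑ X : Finset W,
      ((-1 : ℤ) ^ (univ \ X).card) • (mapDomainRingHom ℤ (piProj J X)).toAddMonoidHom
  have h_apply : ∀ z, altSum z = ∑ X : Finset W, ((-1 : ℤ) ^ (univ \ X).card) •
      mapDomainRingHom ℤ (piProj J X) z := by
    simp [altSum]
  rw [← h_apply]
  refine addMonoidHom_mem_of_forall_of altSum _ (fun σ => ?_) z
  simp only [h_apply, mapDomainRingHom_of]
  rw [sum_neg_one_pow_smul_of_piProj, ← card_univ, ← prod_const]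
  exact Ideal.prod_mem_prod fun v _ => of_sub_one_mem_augmentationIdeal _

/-- Let `W` be a finite set, `(J v)_{v ∈ W}` a family of finite abelian groups and
`H = ∏_{v ∈ W} J v`.  For every `z ∈ ℤ[H]`, the element `∑_{X ⊆ W} (-1)^|W∖X| π_X(z)` lies in
`I(H)^|W|`, where `I(H)` is the augmentation ideal of `ℤ[H]` and `π_X` also denotes the ring
endomorphism of `ℤ[H]` induced by `π_X : H → H`. -/
theorem sum_proj_mem_augmentationIdeal_pow {W : Type*} [Fintype W] [DecidableEq W]
    (J : W → Type*) [∀ v, CommGroup (J v)] [∀ v, Fintype (J v)]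
    (z : MonoidAlgebra ℤ (∀ v, J v)) :
    ∑ X : Finset W, ((-1 : ℤ) ^ (Finset.univ \ X).card) •
        MonoidAlgebra.mapDomainRingHom ℤ (piProj J X) z ∈
      augmentationIdeal (∀ v, J v) ^ Fintype.card W :=
  sum_proj_mem_augmentationIdeal_pow_general J z
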